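/- Let A be a Noetherian ring, let α, β, γ be ideals, and let W be a closed subset of Spec(A) such that V(α + γ) ⊆ W. Then ((α ∩ β) + γ)¬W = (β + γ)¬W. -/

import Mathlib

open PrimeSpectrum

section AssFin
variable {R M : Type*} [CommRing R] [AddCommGroup M] [Module R M]

theorem assFin [IsNoetherianRing R] [IsNoetherian R M] (N : Submodule R M) :
    (associatedPrimes R (M ⧸ N)).Finite := by
  exact associatedPrimes.finite R (M ⧸ N)
end AssFin

/-- The multiplicative set `S`: the complement of the union of the associated
primes `p` of `A ⧸ I` such that `V(p) ⊄ W`. -/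
def gapMonoid {A : Type*} [CommRing A] (I : Ideal A) (W : Set (PrimeSpectrum A)) :
    Submonoid A where
  carrier := {s : A | ∀ p ∈ associatedPrimes A (A ⧸ I),
      ¬ PrimeSpectrum.zeroLocus (p : Set A) ⊆ W → s ∉ p}
  one_mem' := by
    intro p hp _ h1
    exact hp.isPrime.ne_top ((Ideal.eq_top_iff_one p).mpr h1)
  mul_mem' := by
    intro a b ha hb p hp hW hab
    rcases hp.isPrime.mem_or_mem hab with h | h
    · exact ha p hp hW h
    · exact hb p hp hW h

/-- The gap ideal `I ¬ W := S⁻¹I ∩ A`. -/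
def gapIdeal {A : Type*} [CommRing A] (I : Ideal A) (W : Set (PrimeSpectrum A)) :
    Ideal A :=
  (I.map (algebraMap A (Localization (gapMonoid I W)))).comap
    (algebraMap A (Localization (gapMonoid I W)))

section Aux
variable {A : Type*} [CommRing A]

theorem mem_gapIdeal_iff (I : Ideal A) (W : Set (PrimeSpectrum A)) (x : A) :
    x ∈ gapIdeal I W ↔ ∃ s ∈ gapMonoid I W, s * x ∈ I := by
  rw [gapIdeal, Ideal.mem_comap,
    ← IsLocalization.mk'_one (M := gapMonoid I W) (Localization (gapMonoid I W)) x,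
    IsLocalization.mk'_mem_map_algebraMap_iff]

theorem mem_ann_quot (I : Ideal A) (r x : A) :
    r ∈ (⊥ : Submodule A (A ⧸ I)).colon {Ideal.Quotient.mk I x} ↔ r * x ∈ I := by
  rw [Submodule.mem_colon_singleton, Submodule.mem_bot]
  show r • (Submodule.Quotient.mk x) = 0 ↔ _
  rw [← Submodule.Quotient.mk_smul, Submodule.Quotient.mk_eq_zero]
  rfl

theorem ass_transfer₁ [IsNoetherianRing A] {I₁ I₂ J : Ideal A} (hle : I₁ ≤ I₂)
    (hmul : ∀ a ∈ J, ∀ y ∈ I₂, a * y ∈ I₁) {p : Ideal A} (hJp : ¬ J ≤ p)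
    (hass : IsAssociatedPrime p (A ⧸ I₁)) : IsAssociatedPrime p (A ⧸ I₂) := by
  obtain ⟨hprime, y, hy⟩ := isAssociatedPrime_iff.mp hass
  obtain ⟨x, rfl⟩ := Ideal.Quotient.mk_surjective y
  obtain ⟨a, haJ, hap⟩ := SetLike.not_le_iff_exists.mp hJp
  refine isAssociatedPrime_iff.mpr ⟨hprime, Ideal.Quotient.mk I₂ (a * x), ?_⟩
  apply le_antisymm
  · intro t ht
    rw [mem_ann_quot]
    have : t * x ∈ I₁ := (mem_ann_quot I₁ t x).mp (hy ▸ ht)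
    have : t * (a * x) = a * (t * x) := by ring
    rw [this]
    exact I₂.mul_mem_left a (hle ‹t * x ∈ I₁›)
  · intro t ht
    rw [mem_ann_quot] at ht
    have h1 : a * (t * (a * x)) ∈ I₁ := hmul a haJ _ ht
    have h2 : t * (a * a) * x = a * (t * (a * x)) := by ring
    have h3 : t * (a * a) ∈ p := by
      rw [hy, mem_ann_quot, h2]; exact h1
    rcases hprime.mem_or_mem h3 with h | h
    · exact h
    · rcases hprime.mem_or_mem h with h | h <;> exact absurd h hap

theorem ass_transfer₂ [IsNoetherianRing A] {I₁ I₂ J : Ideal A} (hle : I₁ ≤ I₂)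
    (hmul : ∀ a ∈ J, ∀ y ∈ I₂, a * y ∈ I₁) {p : Ideal A} (hJp : ¬ J ≤ p)
    (hass : IsAssociatedPrime p (A ⧸ I₂)) : IsAssociatedPrime p (A ⧸ I₁) := by
  obtain ⟨hprime, y, hy⟩ := isAssociatedPrime_iff.mp hass
  obtain ⟨x, rfl⟩ := Ideal.Quotient.mk_surjective y
  obtain ⟨a, haJ, hap⟩ := SetLike.not_le_iff_exists.mp hJp
  refine isAssociatedPrime_iff.mpr ⟨hprime, Ideal.Quotient.mk I₁ (a * x), ?_⟩
  apply le_antisymm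
  · intro t ht
    rw [mem_ann_quot]
    have htx : t * x ∈ I₂ := (mem_ann_quot I₂ t x).mp (hy ▸ ht)
    have : t * (a * x) = a * (t * x) := by ring
    rw [this]
    exact hmul a haJ _ htx
  · intro t ht
    rw [mem_ann_quot] at ht
    have h3 : t * a ∈ p := by
      rw [hy, mem_ann_quot]
      have : t * a * x = t * (a * x) := by ring
      rw [this]
      exact hle ht
    rcases hprime.mem_or_mem h3 with h | h
    · exact h
    · exact absurd h hap

end Aux

/-- Lemma 1.3.iii: if `V(α + γ) ⊆ W`, then `((α ∩ β) + γ) ¬ W = (β + γ) ¬ W`. -/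
theorem gapIdeal_inf_add {A : Type*} [CommRing A] [IsNoetherianRing A]
    (α β γ : Ideal A) (W : Set (PrimeSpectrum A)) (hW : IsClosed W)
    (h : PrimeSpectrum.zeroLocus ((α + γ : Ideal A) : Set A) ⊆ W) :
    gapIdeal ((α ⊓ β) + γ) W = gapIdeal (β + γ) W := by

  set I₁ : Ideal A := (α ⊓ β) + γ with hI₁
  set I₂ : Ideal A := β + γ with hI₂
  set J : Ideal A := α + γ with hJdef
  have hle : I₁ ≤ I₂ := sup_le_sup_right inf_le_right γ
  have hmulI : J * I₂ ≤ I₁ := by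
    rw [Ideal.mul_le]
    intro r hr s hs
    obtain ⟨r₁, hr₁, r₂, hr₂, rfl⟩ := Submodule.mem_sup.mp hr
    obtain ⟨s₁, hs₁, s₂, hs₂, rfl⟩ := Submodule.mem_sup.mp hs
    have : (r₁ + r₂) * (s₁ + s₂) = r₁ * s₁ + (r₁ * s₂ + r₂ * s₁ + r₂ * s₂) := by ring
    rw [this]
    refine Submodule.mem_sup.mpr ⟨r₁ * s₁, ⟨Ideal.mul_mem_right _ _ hr₁,
      Ideal.mul_mem_left _ _ hs₁⟩, _, ?_, rfl⟩
    exact add_mem (add_mem (Ideal.mul_mem_left _ _ hs₂) (Ideal.mul_mem_right _ _ hr₂))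
      (Ideal.mul_mem_right _ _ hr₂)
  have hmul : ∀ a ∈ J, ∀ y ∈ I₂, a * y ∈ I₁ := fun a ha y hy =>
    hmulI (Ideal.mul_mem_mul ha hy)
  -- bad primes do not contain J
  have hbadJ : ∀ p : Ideal A, ¬ PrimeSpectrum.zeroLocus (p : Set A) ⊆ W → ¬ J ≤ p := by
    intro p hbad hJp
    exact hbad (le_trans (PrimeSpectrum.zeroLocus_anti_mono (hJp : (J : Set A) ⊆ p)) h)
  have hbadiff : ∀ p : Ideal A, ¬ PrimeSpectrum.zeroLocus (p : Set A) ⊆ W →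
      (p ∈ associatedPrimes A (A ⧸ I₁) ↔ p ∈ associatedPrimes A (A ⧸ I₂)) := by
    intro p hbad
    exact ⟨fun hp => ass_transfer₁ hle hmul (hbadJ p hbad) hp,
      fun hp => ass_transfer₂ hle hmul (hbadJ p hbad) hp⟩
  have hS12 : ∀ s, s ∈ gapMonoid I₁ W → s ∈ gapMonoid I₂ W := by
    intro s hs p hp hbad
    exact hs p ((hbadiff p hbad).mpr hp) hbad
  have hS21 : ∀ s, s ∈ gapMonoid I₂ W → s ∈ gapMonoid I₁ W := by
    intro s hs p hp hbad
    exact hs p ((hbadiff p hbad).mp hp) hbad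
  -- prime avoidance: find a ∈ J avoiding all bad associated primes of A ⧸ I₁
  have hAssFin : (associatedPrimes A (A ⧸ I₁)).Finite := assFin (I₁ : Submodule A A)
  have hBfin : {p | p ∈ associatedPrimes A (A ⧸ I₁) ∧
      ¬ PrimeSpectrum.zeroLocus (p : Set A) ⊆ W}.Finite :=
    hAssFin.subset (fun p hp => hp.1)
  obtain ⟨a, haJ, haS⟩ : ∃ a ∈ J, ∀ p ∈ associatedPrimes A (A ⧸ I₁),
      ¬ PrimeSpectrum.zeroLocus (p : Set A) ⊆ W → a ∉ p := by
    have hnot : ¬ ((J : Set A) ⊆ ⋃ p ∈ (↑hBfin.toFinset : Set (Ideal A)), ((p : Ideal A) : Set A)) := by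
      rw [Ideal.subset_union_prime (⊤ : Ideal A) (⊤ : Ideal A)
        (fun p hp _ _ => ((hBfin.mem_toFinset.mp hp).1 : IsAssociatedPrime p _).isPrime)]
      rintro ⟨p, hpB, hJp⟩
      exact hbadJ p (hBfin.mem_toFinset.mp hpB).2 hJp
    obtain ⟨a, haJ, ha⟩ := Set.not_subset.mp hnot
    refine ⟨a, haJ, fun p hp hbad hap => ha ?_⟩
    exact Set.mem_biUnion (Finset.mem_coe.mpr (hBfin.mem_toFinset.mpr ⟨hp, hbad⟩)) hap
  have haS₁ : a ∈ gapMonoid I₁ W := fun p hp hbad => haS p hp hbad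
  ext x
  rw [mem_gapIdeal_iff, mem_gapIdeal_iff]
  constructor
  · rintro ⟨s, hs, hsx⟩
    exact ⟨s, hS12 s hs, hle hsx⟩
  · rintro ⟨s, hs, hsx⟩
    refine ⟨a * s, (gapMonoid I₁ W).mul_mem haS₁ (hS21 s hs), ?_⟩
    rw [mul_assoc]
    exact hmul a haJ _ hsx
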